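/- arXiv:1712.01964 — 2 statements merged into one kernel-verified Lean document; each statement's English description precedes it below -/
import Mathlib

section
/- The closures of any two nonempty open subsets of the Bing space B intersect; in particular every nonempty open set is dense in the sense that its closure meets every other nonempty open set. -/
/-- A point of the Bing space: a rational pair `(x, y)` with `0 ≤ y`. -/
structure BingPt where
  x : ℚ
  y : ℚ
  hy : 0 ≤ y

/-- The pair of base "intervals" attached to the point `(a,b)`:
rational points `(x,0)` with `|x - (a - b/√3)| < ε` or `|x - (a + b/√3)| < ε`. -/
def wedge (a b : ℚ) (ε : ℝ) : Set BingPt :=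
  {z : BingPt | z.y = 0 ∧ (|(z.x : ℝ) - ((a : ℝ) - (b : ℝ) / Real.sqrt 3)| < ε ∨
    |(z.x : ℝ) - ((a : ℝ) + (b : ℝ) / Real.sqrt 3)| < ε)}

/-- A set `U` is Bing-open if each of its points `(a,b)` admits `ε > 0`
with the corresponding base intervals contained in `U`. -/
def BingOpen (U : Set BingPt) : Prop :=
  ∀ z ∈ U, ∃ ε : ℝ, 0 < ε ∧ wedge z.x z.y ε ⊆ U

/-- The Bing topology. -/
instance : TopologicalSpace BingPt where
  IsOpen := BingOpen
  isOpen_univ := fun _ _ => ⟨1, one_pos, fun _ _ => trivial⟩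
  isOpen_inter := by
    intro U V hU hV z hz
    obtain ⟨ε1, hε1, h1⟩ := hU z hz.1
    obtain ⟨ε2, hε2, h2⟩ := hV z hz.2
    refine ⟨min ε1 ε2, lt_min hε1 hε2, fun w hw => ⟨h1 ⟨hw.1, ?_⟩, h2 ⟨hw.1, ?_⟩⟩⟩
    · exact hw.2.imp (fun h => h.trans_le (min_le_left _ _)) (fun h => h.trans_le (min_le_left _ _))
    · exact hw.2.imp (fun h => h.trans_le (min_le_right _ _)) (fun h => h.trans_le (min_le_right _ _))
  isOpen_sUnion := by
    intro S hS z hz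
    obtain ⟨U, hU, hzU⟩ := hz
    obtain ⟨ε, hε, h⟩ := hS U hU z hzU
    exact ⟨ε, hε, fun w hw => ⟨U, hU, h hw⟩⟩


lemma bing_mem_closure (U : Set BingPt) (hU : IsOpen U) (z₀ : BingPt) (ε₁ : ℝ)
    (hε₁ : 0 < ε₁) (hsub : wedge z₀.x z₀.y ε₁ ⊆ U) (z : BingPt)
    (h : |((z.x : ℝ) - (z.y : ℝ) / Real.sqrt 3) - ((z₀.x : ℝ) - (z₀.y : ℝ) / Real.sqrt 3)| < ε₁ ∨
         |((z.x : ℝ) + (z.y : ℝ) / Real.sqrt 3) - ((z₀.x : ℝ) - (z₀.y : ℝ) / Real.sqrt 3)| < ε₁) :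
    z ∈ closure U := by
  rw [mem_closure_iff]
  intro o ho hzo
  obtain ⟨ε, hε, hsub'⟩ := ho z hzo
  set c₁ : ℝ := (z₀.x : ℝ) - (z₀.y : ℝ) / Real.sqrt 3 with hc₁
  -- w is the relevant center attached to z
  obtain ⟨w, hw, hwz⟩ : ∃ w : ℝ, |w - c₁| < ε₁ ∧
      (w = (z.x : ℝ) - (z.y : ℝ) / Real.sqrt 3 ∨ w = (z.x : ℝ) + (z.y : ℝ) / Real.sqrt 3) := by
    rcases h with h | h
    · exact ⟨_, h, Or.inl rfl⟩
    · exact ⟨_, h, Or.inr rfl⟩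
  have h1 : max (w - ε) (c₁ - ε₁) < min (w + ε) (c₁ + ε₁) := by
    obtain ⟨hl, hr⟩ := abs_lt.mp hw
    simp only [max_lt_iff, lt_min_iff]
    refine ⟨⟨?_, ?_⟩, ?_, ?_⟩ <;> linarith
  obtain ⟨q, hq1, hq2⟩ := exists_rat_btwn h1
  have hqw : |(q : ℝ) - w| < ε := by
    rw [abs_lt]
    constructor
    · have := (le_max_left (w - ε) (c₁ - ε₁)).trans_lt hq1; linarith
    · have := hq2.trans_le (min_le_left _ _); linarith
  have hqc : |(q : ℝ) - c₁| < ε₁ := by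
    rw [abs_lt]
    constructor
    · have := (le_max_right (w - ε) (c₁ - ε₁)).trans_lt hq1; linarith
    · have := hq2.trans_le (min_le_right _ _); linarith
  refine ⟨⟨q, 0, le_refl 0⟩, ?_, ?_⟩
  · apply hsub'
    refine ⟨rfl, ?_⟩
    rcases hwz with rfl | rfl
    · exact Or.inl hqw
    · exact Or.inr hqw
  · apply hsub
    exact ⟨rfl, Or.inl hqc⟩

lemma bing_key (c₁ c₂ : ℝ) (ε₁ ε₂ : ℝ) (hε₁ : 0 < ε₁) (hε₂ : 0 < ε₂) (hle : c₁ ≤ c₂) :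
    ∃ z : BingPt, |((z.x : ℝ) - (z.y : ℝ) / Real.sqrt 3) - c₁| < ε₁ ∧
      |((z.x : ℝ) + (z.y : ℝ) / Real.sqrt 3) - c₂| < ε₂ := by
  have hs3 : (0 : ℝ) < Real.sqrt 3 := Real.sqrt_pos.mpr (by norm_num)
  set δ : ℝ := min ε₁ ε₂ with hδ
  have hδpos : 0 < δ := lt_min hε₁ hε₂
  set m : ℝ := (c₁ + c₂) / 2
  set d : ℝ := (c₂ - c₁) / 2
  have hd : 0 ≤ d := by simp only [d]; linarith
  obtain ⟨a, ha1, ha2⟩ := exists_rat_btwn (show m < m + δ / 2 by linarith)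
  obtain ⟨b, hb1, hb2⟩ := exists_rat_btwn
    (show d * Real.sqrt 3 < (d + δ / 2) * Real.sqrt 3 by nlinarith)
  have hbpos : (0 : ℝ) ≤ (b : ℝ) := le_of_lt ((by positivity : (0:ℝ) ≤ d * Real.sqrt 3).trans_lt hb1)
  have hb0 : (0 : ℚ) ≤ b := by exact_mod_cast hbpos
  have hbd1 : d < (b : ℝ) / Real.sqrt 3 := by
    rw [lt_div_iff₀ hs3]; exact hb1
  have hbd2 : (b : ℝ) / Real.sqrt 3 < d + δ / 2 := by
    rw [div_lt_iff₀ hs3]; exact hb2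
  refine ⟨⟨a, b, hb0⟩, ?_, ?_⟩ <;> simp only [] <;> rw [abs_lt] <;> constructor
  · have : c₁ = m - d := by simp [m, d]; ring
    have h1 : δ ≤ ε₁ := min_le_left _ _
    linarith
  · have : c₁ = m - d := by simp [m, d]; ring
    have h1 : δ ≤ ε₁ := min_le_left _ _
    linarith
  · have : c₂ = m + d := by simp [m, d]; ring
    have h2 : δ ≤ ε₂ := min_le_right _ _
    linarith
  · have : c₂ = m + d := by simp [m, d]; ring
    have h2 : δ ≤ ε₂ := min_le_right _ _
    linarith

/-- The closures of any two nonempty open subsets of the Bing space intersect. -/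
theorem bing_closures_intersect (U V : Set BingPt) (hU : IsOpen U) (hV : IsOpen V)
    (hUne : U.Nonempty) (hVne : V.Nonempty) :
    (closure U ∩ closure V).Nonempty := by
  obtain ⟨z₀, hz₀⟩ := hUne
  obtain ⟨z₁, hz₁⟩ := hVne
  obtain ⟨ε₁, hε₁, hsub₁⟩ := hU z₀ hz₀
  obtain ⟨ε₂, hε₂, hsub₂⟩ := hV z₁ hz₁
  set c₁ : ℝ := (z₀.x : ℝ) - (z₀.y : ℝ) / Real.sqrt 3 with hc₁
  set c₂ : ℝ := (z₁.x : ℝ) - (z₁.y : ℝ) / Real.sqrt 3 with hc₂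
  rcases le_total c₁ c₂ with hle | hle
  · obtain ⟨z, h1, h2⟩ := bing_key c₁ c₂ ε₁ ε₂ hε₁ hε₂ hle
    exact ⟨z, bing_mem_closure U hU z₀ ε₁ hε₁ hsub₁ z (Or.inl h1),
      bing_mem_closure V hV z₁ ε₂ hε₂ hsub₂ z (Or.inr h2)⟩
  · obtain ⟨z, h1, h2⟩ := bing_key c₂ c₁ ε₂ ε₁ hε₂ hε₁ hle
    exact ⟨z, bing_mem_closure U hU z₀ ε₁ hε₁ hsub₁ z (Or.inr h2),
      bing_mem_closure V hV z₁ ε₂ hε₂ hsub₂ z (Or.inl h1)⟩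
end

section
/- Let {a_n} be a sequence of points of B \ B₀ (points with positive second coordinate) converging to (0,0) in the Euclidean topology on ℚ×ℚ. Then the set A = {(0,0)} ∪ {a_n : n ∈ ℕ} is θ-closed and discrete in the Bing space B, but A is not θ-discrete: the closure (in B) of any Bing-neighborhood of (0,0) contains all but finitely many points of A. -/
/-- `D` is θ-discrete: every point has a neighborhood whose closure meets `D` in ≤ 1 point. -/
def ThetaDiscrete {X : Type*} [TopologicalSpace X] (D : Set X) : Prop :=
  ∀ x : X, ∃ O ∈ nhds x, (closure O ∩ D).Subsingleton

/-- `D` is θ-closed: every point outside `D` has a neighborhood whose closure misses `D`. -/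
def ThetaClosed {X : Type*} [TopologicalSpace X] (D : Set X) : Prop :=
  ∀ x : X, x ∉ D → ∃ O ∈ nhds x, closure O ∩ D = ∅

/-- `D` is discrete (as a subset): every point has a neighborhood meeting `D` in ≤ 1 point. -/
def DiscreteIn {X : Type*} [TopologicalSpace X] (D : Set X) : Prop :=
  ∀ x : X, ∃ O ∈ nhds x, (O ∩ D).Subsingleton

/-- The origin of the Bing space. -/
def origin : BingPt := ⟨0, 0, le_refl 0⟩

/-!
A point `p = (x, y)` of the Bing space touches the axis at its two *feet* `x ∓ y/√3`, and its
basic neighbourhoods consist of `p` and the rational axis points `ε`-close to one of its feet.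
Because `√3` is irrational, distinct points have disjoint sets of feet. Hence `p` lies in the
closure of a basic neighbourhood of `q` as soon as a foot of `p` is `ε`-close to a foot of `q`,
while points whose feet have disjoint thickenings have disjoint basic neighbourhoods.

The feet of `a n` converge to `0`, the only foot of the origin, so `a n` eventually lies in the
closure of every neighbourhood of the origin. A point outside `A` has its feet at positive
distance from the compact set of all feet of points of `A`, which separates it from `A` by closures.
-/

open Filter Topology Metric Set

attribute [ext] BingPt

namespace BingPt

noncomputable def leftFoot (p : BingPt) : ℝ := p.x - p.y / √3

noncomputable def rightFoot (p : BingPt) : ℝ := p.x + p.y / √3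

noncomputable def feet (p : BingPt) : Set ℝ := {p.leftFoot, p.rightFoot}

def basicNhd (p : BingPt) (ε : ℝ) : Set BingPt := insert p (wedge p.x p.y ε)

lemma leftFoot_mem_feet (p : BingPt) : p.leftFoot ∈ p.feet := mem_insert _ _

lemma rightFoot_mem_feet (p : BingPt) : p.rightFoot ∈ p.feet := mem_insert_of_mem _ rfl

lemma isCompact_feet (p : BingPt) : IsCompact p.feet :=
  ((finite_singleton _).insert _).isCompact

lemma feet_of_y_eq_zero {p : BingPt} (hy : p.y = 0) : p.feet = {(p.x : ℝ)} := by
  simp [feet, leftFoot, rightFoot, hy]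

lemma mem_wedge_iff {p z : BingPt} {ε : ℝ} :
    z ∈ wedge p.x p.y ε ↔ z.y = 0 ∧ (z.x : ℝ) ∈ thickening ε p.feet := by
  simp [wedge, mem_thickening_iff, feet, leftFoot, rightFoot, Real.dist_eq]

lemma rat_eq_of_add_div_sqrt_three_eq {x₁ x₂ u₁ u₂ : ℚ}
    (h : (x₁ : ℝ) + u₁ / √3 = x₂ + u₂ / √3) : x₁ = x₂ ∧ u₁ = u₂ := by
  have hirr : Irrational √3 := by simpa using Nat.prime_three.irrational_sqrt
  have h3 : √3 ≠ 0 := by positivity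
  have key : ((x₁ - x₂ : ℚ) : ℝ) * √3 = ((u₂ - u₁ : ℚ) : ℝ) := by
    push_cast
    field_simp at h
    linarith
  by_cases hx : x₁ = x₂
  · subst hx
    simp only [sub_self, Rat.cast_zero, zero_mul] at key
    exact ⟨rfl, by linarith [(Rat.cast_eq_zero (α := ℝ)).1 key.symm]⟩
  · refine absurd ?_ (hirr.ne_rat ((u₂ - u₁) / (x₁ - x₂)))
    have : ((x₁ - x₂ : ℚ) : ℝ) ≠ 0 := by exact_mod_cast sub_ne_zero.2 hx
    rw [Rat.cast_div, ← key]
    field_simp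

lemma eq_of_mem_feet {p q : BingPt} {c : ℝ} (hp : c ∈ p.feet) (hq : c ∈ q.feet) : p = q := by
  have hL (r : BingPt) : r.leftFoot = r.x + ((-r.y : ℚ) : ℝ) / √3 := by
    rw [leftFoot, Rat.cast_neg]; ring
  have hR (r : BingPt) : r.rightFoot = r.x + (r.y : ℝ) / √3 := rfl
  rcases hp with rfl | rfl <;> rcases hq with hq | hq <;>
  · simp only [hL, hR, mem_singleton_iff] at hq
    obtain ⟨hx, hy⟩ := rat_eq_of_add_div_sqrt_three_eq hq
    ext <;> linarith [p.hy, q.hy]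

lemma isOpen_basicNhd (p : BingPt) {ε : ℝ} (hε : 0 < ε) : IsOpen (p.basicNhd ε) := by
  rintro z (rfl | hz)
  · exact ⟨ε, hε, subset_insert _ _⟩
  · obtain ⟨hzy, hzx⟩ := mem_wedge_iff.1 hz
    obtain ⟨δ, hδ, hball⟩ := Metric.isOpen_iff.1 isOpen_thickening _ hzx
    refine ⟨δ, hδ, fun w hw => mem_insert_of_mem _ ?_⟩
    obtain ⟨hwy, hwx⟩ := mem_wedge_iff.1 hw
    rw [feet_of_y_eq_zero hzy, thickening_singleton] at hwx
    exact mem_wedge_iff.2 ⟨hwy, hball hwx⟩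

lemma nhds_basis_basicNhd (p : BingPt) : (𝓝 p).HasBasis (fun ε : ℝ => 0 < ε) p.basicNhd := by
  refine ⟨fun t => ⟨fun ht => ?_, fun ⟨ε, hε, hsub⟩ =>
    mem_of_superset ((isOpen_basicNhd p hε).mem_nhds (mem_insert _ _)) hsub⟩⟩
  obtain ⟨V, hVt, hV, hpV⟩ := mem_nhds_iff.1 ht
  obtain ⟨ε, hε, hwedge⟩ := hV p hpV
  exact ⟨ε, hε, (insert_subset hpV hwedge).trans hVt⟩

lemma eq_of_mem_basicNhd_of_y_ne_zero {p w : BingPt} {ε : ℝ} (hw : w ∈ p.basicNhd ε)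
    (hy : w.y ≠ 0) : w = p :=
  hw.resolve_right fun hw => hy (mem_wedge_iff.1 hw).1

lemma mem_thickening_feet_of_mem_basicNhd {p w : BingPt} {ε : ℝ} (hε : 0 < ε)
    (hw : w ∈ p.basicNhd ε) (hy : w.y = 0) : (w.x : ℝ) ∈ thickening ε p.feet := by
  rcases hw with rfl | hw
  · exact self_subset_thickening hε _ (by rw [feet_of_y_eq_zero hy]; rfl)
  · exact (mem_wedge_iff.1 hw).2

lemma disjoint_basicNhd {p q : BingPt} {δ ε : ℝ} (hpq : p ≠ q) (hδ : 0 < δ) (hε : 0 < ε)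
    (h : Disjoint (thickening δ p.feet) (thickening ε q.feet)) :
    Disjoint (p.basicNhd δ) (q.basicNhd ε) := by
  refine disjoint_left.2 fun w hwp hwq => ?_
  by_cases hy : w.y = 0
  · exact h.ne_of_mem (mem_thickening_feet_of_mem_basicNhd hδ hwp hy)
      (mem_thickening_feet_of_mem_basicNhd hε hwq hy) rfl
  · exact hpq ((eq_of_mem_basicNhd_of_y_ne_zero hwp hy).symm.trans
      (eq_of_mem_basicNhd_of_y_ne_zero hwq hy))

lemma mem_closure_wedge {p q : BingPt} {ε : ℝ} (h : (p.feet ∩ thickening ε q.feet).Nonempty) :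
    p ∈ closure (wedge q.x q.y ε) := by
  obtain ⟨c, hcp, hcq⟩ := h
  refine (mem_closure_iff_nhds_basis (nhds_basis_basicNhd p)).2 fun δ hδ => ?_
  obtain ⟨r, hr⟩ := Rat.denseRange_cast.exists_mem_open (isOpen_ball.inter isOpen_thickening)
    ⟨c, mem_ball_self hδ, hcq⟩
  exact ⟨⟨r, 0, le_rfl⟩, mem_wedge_iff.2 ⟨rfl, hr.2⟩,
    mem_insert_of_mem _ (mem_wedge_iff.2 ⟨rfl, ball_subset_thickening hcp δ hr.1⟩)⟩

instance : T2Space BingPt := by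
  refine ⟨fun p q hpq => ?_⟩
  have hfeet : Disjoint p.feet q.feet := disjoint_left.2 fun c hp hq => hpq (eq_of_mem_feet hp hq)
  obtain ⟨δ, hδ, h⟩ := hfeet.exists_thickenings (isCompact_feet p) (isCompact_feet q).isClosed
  exact ⟨_, _, isOpen_basicNhd p hδ, isOpen_basicNhd q hδ, mem_insert _ _, mem_insert _ _,
    disjoint_basicNhd hpq hδ hδ h⟩

lemma tendsto_feet {ι : Type*} {l : Filter ι} {a : ι → BingPt} {p : BingPt}
    (h : Tendsto (fun n => ((a n).x, (a n).y)) l (𝓝 (p.x, p.y))) :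
    Tendsto (fun n => (a n).leftFoot) l (𝓝 p.leftFoot) ∧
      Tendsto (fun n => (a n).rightFoot) l (𝓝 p.rightFoot) := by
  have hx : Tendsto (fun n => ((a n).x : ℝ)) l (𝓝 (p.x : ℝ)) :=
    (Rat.continuous_coe_real.tendsto _).comp ((continuous_fst.tendsto _).comp h)
  have hy : Tendsto (fun n => ((a n).y : ℝ)) l (𝓝 (p.y : ℝ)) :=
    (Rat.continuous_coe_real.tendsto _).comp ((continuous_snd.tendsto _).comp h)
  exact ⟨hx.sub (hy.div_const _), hx.add (hy.div_const _)⟩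

theorem discreteIn_insert_of_forall_pos {p : BingPt} {S : Set BingPt} (hS : ∀ q ∈ S, 0 < q.y) :
    DiscreteIn (insert p S) := by
  intro z
  by_cases hz : z = p
  · subst hz
    refine ⟨z.basicNhd 1, (nhds_basis_basicNhd z).mem_of_mem one_pos,
      (subsingleton_singleton (a := z)).anti ?_⟩
    rintro q ⟨hq, rfl | hqS⟩
    exacts [rfl, eq_of_mem_basicNhd_of_y_ne_zero hq (hS q hqS).ne']
  · refine ⟨z.basicNhd 1 ∩ {p}ᶜ, inter_mem ((nhds_basis_basicNhd z).mem_of_mem one_pos)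
      (isOpen_compl_singleton.mem_nhds hz), (subsingleton_singleton (a := z)).anti ?_⟩
    rintro q ⟨⟨hq, hqp⟩, rfl | hqS⟩
    exacts [absurd rfl hqp, eq_of_mem_basicNhd_of_y_ne_zero hq (hS q hqS).ne']

section ConvergentSequence

variable {a : ℕ → BingPt} {p : BingPt}

lemma eventually_mem_closure
    (h : Tendsto (fun n => ((a n).x, (a n).y)) atTop (𝓝 (p.x, p.y)))
    {O : Set BingPt} (hO : O ∈ 𝓝 p) : ∀ᶠ n in atTop, a n ∈ closure O := by
  obtain ⟨ε, hε, hsub⟩ := (nhds_basis_basicNhd p).mem_iff.1 hO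
  filter_upwards [(tendsto_feet h).1 (ball_mem_nhds _ hε)] with n hn
  exact closure_mono ((subset_insert _ _).trans hsub)
    (mem_closure_wedge ⟨_, leftFoot_mem_feet _,
      ball_subset_thickening (leftFoot_mem_feet p) ε hn⟩)

theorem thetaClosed_insert_range
    (h : Tendsto (fun n => ((a n).x, (a n).y)) atTop (𝓝 (p.x, p.y))) :
    ThetaClosed (insert p (range a)) := by
  set A := insert p (range a)
  obtain ⟨hL, hR⟩ := tendsto_feet h
  set K := leftFoot '' A ∪ rightFoot '' A
  have hK : IsCompact K := by
    simp only [K, A, image_insert_eq, ← range_comp]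
    exact hL.isCompact_insert_range.union hR.isCompact_insert_range
  have hfeetK : ∀ q ∈ A, q.feet ⊆ K := by
    rintro q hq c (rfl | rfl)
    exacts [Or.inl (mem_image_of_mem _ hq), Or.inr (mem_image_of_mem _ hq)]
  intro z hz
  have hdisj : Disjoint z.feet K := by
    refine disjoint_left.2 fun c hcz hcK => hz ?_
    rcases hcK with ⟨q, hq, rfl⟩ | ⟨q, hq, rfl⟩
    exacts [eq_of_mem_feet (leftFoot_mem_feet q) hcz ▸ hq,
      eq_of_mem_feet (rightFoot_mem_feet q) hcz ▸ hq]
  obtain ⟨η, hη, hsep⟩ := hdisj.exists_thickenings (isCompact_feet z) hK.isClosed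
  refine ⟨z.basicNhd η, (nhds_basis_basicNhd z).mem_of_mem hη,
    eq_empty_of_forall_notMem fun q ⟨hqcl, hqA⟩ => ?_⟩
  have hqz : q ≠ z := fun hqz => hz (hqz ▸ hqA)
  have hsepq := hsep.symm.mono_left (thickening_subset_of_subset η (hfeetK q hqA))
  exact ((disjoint_basicNhd hqz hη hη hsepq).closure_right
    (isOpen_basicNhd q hη)).notMem_of_mem_left (mem_insert _ _) hqcl

theorem not_thetaDiscrete_insert_range
    (h : Tendsto (fun n => ((a n).x, (a n).y)) atTop (𝓝 (p.x, p.y)))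
    (hne : ∀ n, a n ≠ p) :
    ¬ ThetaDiscrete (insert p (range a)) := by
  intro hθ
  obtain ⟨O, hO, hsub⟩ := hθ p
  obtain ⟨n, hn⟩ := (eventually_mem_closure h hO).exists
  exact hne n (hsub ⟨hn, mem_insert_of_mem _ (mem_range_self n)⟩
    ⟨subset_closure (mem_of_mem_nhds hO), mem_insert _ _⟩)

end ConvergentSequence

end BingPt

/-- If `a n` are points with positive second coordinate converging to `(0,0)` in the
Euclidean topology of `ℚ × ℚ`, then `A = {(0,0)} ∪ {a n}` is θ-closed and discrete in the
Bing space, but not θ-discrete: the closure of every Bing-neighborhood of the origin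
contains all but finitely many of the points `a n`. -/
theorem bing_thetaClosed_discrete_not_thetaDiscrete (a : ℕ → BingPt)
    (hpos : ∀ n, 0 < (a n).y)
    (hconv : Filter.Tendsto (fun n => ((a n).x, (a n).y)) Filter.atTop (nhds ((0 : ℚ), (0 : ℚ)))) :
    ThetaClosed ({origin} ∪ Set.range a) ∧ DiscreteIn ({origin} ∪ Set.range a) ∧
    ¬ ThetaDiscrete ({origin} ∪ Set.range a) ∧
    ∀ O ∈ nhds origin, {n : ℕ | a n ∉ closure O}.Finite := by
  have hne : ∀ n, a n ≠ origin := fun n hn => (hpos n).ne' (by rw [hn]; rfl)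
  rw [singleton_union]
  refine ⟨BingPt.thetaClosed_insert_range hconv,
    BingPt.discreteIn_insert_of_forall_pos (forall_mem_range.2 hpos),
    BingPt.not_thetaDiscrete_insert_range hconv hne, fun O hO => ?_⟩
  exact eventually_cofinite.1 (Nat.cofinite_eq_atTop ▸ BingPt.eventually_mem_closure hconv hO)
end
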